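/- arXiv:1604.03387 — 4 statements merged into one kernel-verified Lean document; each statement's English description precedes it below -/
import Mathlib

section
/- Let ψ : ℝ^d → ℝ be a convex differentiable function, and for t ∈ [0,1] define the interpolation map T_t(z) = (1−t)·z + t·∇ψ(z). Then for all z, ẑ ∈ ℝ^d and all t ∈ [0,1], one has ‖T_t(z) − T_t(ẑ)‖ ≥ (1−t)·‖z − ẑ‖. In particular, for each t ∈ [0,1), the map T_t is injective. -/
/-!
Monotonicity of `∇ψ` is the one-dimensional fact that the derivative of the convex function
`s ↦ ψ(y + s(x - y))` is monotone. Pairing `T_t z - T_t z'` with `z - z'` then gives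
`(1 - t)‖z - z'‖² + t⟪∇ψ z - ∇ψ z', z - z'⟫ ≥ (1 - t)‖z - z'‖²`, and Cauchy–Schwarz turns this into
the expansion bound, which forces injectivity when `t < 1`.
-/

open Set

open scoped RealInnerProductSpace

section Monotone

variable {E : Type*} [NormedAddCommGroup E]

lemma ConvexOn.fderiv_apply_sub_le [NormedSpace ℝ E] {s : Set E} {f : E → ℝ}
    (hf : ConvexOn ℝ s f) {x y : E} (hx : x ∈ s) (hy : y ∈ s)
    (hfx : DifferentiableAt ℝ f x) (hfy : DifferentiableAt ℝ f y) :
    fderiv ℝ f y (x - y) ≤ fderiv ℝ f x (x - y) := by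
  let ℓ : ℝ →ᵃ[ℝ] E := AffineMap.lineMap y x
  have hderiv : ∀ r : ℝ, DifferentiableAt ℝ f (ℓ r) →
      HasDerivAt (f ∘ ℓ) (fderiv ℝ f (ℓ r) (x - y)) r := fun r hr =>
    hr.hasFDerivAt.comp_hasDerivAt r AffineMap.hasDerivAt_lineMap
  have hg : ConvexOn ℝ (ℓ ⁻¹' s) (f ∘ ℓ) := hf.comp_affineMap ℓ
  have h0 : (0 : ℝ) ∈ ℓ ⁻¹' s := by simpa [ℓ] using hy
  have h1 : (1 : ℝ) ∈ ℓ ⁻¹' s := by simpa [ℓ] using hx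
  have hℓ0 : ℓ 0 = y := AffineMap.lineMap_apply_zero y x
  have hℓ1 : ℓ 1 = x := AffineMap.lineMap_apply_one y x
  calc fderiv ℝ f y (x - y)
      ≤ slope (f ∘ ℓ) 0 1 :=
        hg.le_slope_of_hasDerivAt h0 h1 zero_lt_one (hℓ0 ▸ hderiv 0 (hℓ0 ▸ hfy))
    _ ≤ fderiv ℝ f x (x - y) :=
        hg.slope_le_of_hasDerivAt h0 h1 zero_lt_one (hℓ1 ▸ hderiv 1 (hℓ1 ▸ hfx))

variable [InnerProductSpace ℝ E]

lemma ConvexOn.inner_gradient_sub_nonneg [CompleteSpace E] {s : Set E} {f : E → ℝ}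
    (hf : ConvexOn ℝ s f) {x y : E} (hx : x ∈ s) (hy : y ∈ s)
    (hfx : DifferentiableAt ℝ f x) (hfy : DifferentiableAt ℝ f y) :
    0 ≤ ⟪gradient f x - gradient f y, x - y⟫ := by
  rw [inner_sub_left, sub_nonneg, inner_gradient_left, inner_gradient_left]
  exact hf.fderiv_apply_sub_le hx hy hfx hfy

lemma one_sub_mul_norm_sub_le_norm_interpolate_sub {G : E → E}
    (hG : ∀ x y, 0 ≤ ⟪G x - G y, x - y⟫) {t : ℝ} (ht : 0 ≤ t) (x y : E) :
    (1 - t) * ‖x - y‖ ≤ ‖((1 - t) • x + t • G x) - ((1 - t) • y + t • G y)‖ := by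
  set T := ((1 - t) • x + t • G x) - ((1 - t) • y + t • G y)
  have hT : T = (1 - t) • (x - y) + t • (G x - G y) := by module
  have hpair : (1 - t) * ‖x - y‖ ^ 2 ≤ ‖T‖ * ‖x - y‖ :=
    calc (1 - t) * ‖x - y‖ ^ 2
        ≤ (1 - t) * ‖x - y‖ ^ 2 + t * ⟪G x - G y, x - y⟫ :=
          le_add_of_nonneg_right (mul_nonneg ht (hG x y))
      _ = ⟪T, x - y⟫ := by
          rw [hT, inner_add_left, real_inner_smul_left, real_inner_smul_left,
            real_inner_self_eq_norm_sq]
      _ ≤ ‖T‖ * ‖x - y‖ := real_inner_le_norm T (x - y)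
  rcases (norm_nonneg (x - y)).eq_or_lt with h | h
  · rw [← h, mul_zero]
    exact norm_nonneg T
  · rw [sq, ← mul_assoc] at hpair
    exact le_of_mul_le_mul_right hpair h

end Monotone

/-- For a convex differentiable `ψ : ℝ^d → ℝ`, the interpolation maps
`T_t(z) = (1−t)z + t∇ψ(z)` satisfy `‖T_t z − T_t z'‖ ≥ (1−t)‖z − z'‖`, and are injective
for `t ∈ [0,1)`. -/
theorem interpolant_expansion_and_injectivity
    (d : ℕ) (ψ : EuclideanSpace ℝ (Fin d) → ℝ)
    (hconv : ConvexOn ℝ Set.univ ψ) (hdiff : Differentiable ℝ ψ) :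
    (∀ t ∈ Icc (0:ℝ) 1, ∀ z z' : EuclideanSpace ℝ (Fin d),
      (1 - t) * ‖z - z'‖ ≤
        ‖((1 - t) • z + t • gradient ψ z) - ((1 - t) • z' + t • gradient ψ z')‖) ∧
    (∀ t ∈ Ico (0:ℝ) 1,
      Function.Injective (fun z : EuclideanSpace ℝ (Fin d) =>
        (1 - t) • z + t • gradient ψ z)) := by
  have hmono : ∀ x y, 0 ≤ ⟪gradient ψ x - gradient ψ y, x - y⟫ := fun x y =>
    hconv.inner_gradient_sub_nonneg (mem_univ x) (mem_univ y) (hdiff x) (hdiff y)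
  refine ⟨fun t ht => one_sub_mul_norm_sub_le_norm_interpolate_sub hmono ht.1,
    fun t ht z z' hzz' => ?_⟩
  have hexp := one_sub_mul_norm_sub_le_norm_interpolate_sub hmono ht.1 z z'
  rw [show (1 - t) • z + t • gradient ψ z = (1 - t) • z' + t • gradient ψ z' from hzz',
    sub_self, norm_zero] at hexp
  have hdist : ‖z - z'‖ ≤ 0 := nonpos_of_mul_nonpos_right hexp (sub_pos.2 ht.2)
  exact sub_eq_zero.1 (norm_le_zero_iff.1 hdist)
end

section
/- Let d ≥ 1, r > 0, and let a : [0,1] → (0,∞)^d be a C² curve with ∏_{j=1}^d a_j(t) = r^d for all t and such that the product a_j(t)·a_j''(t) is independent of j (the geodesic equations on the surface {a ∈ (0,∞)^d : ∏ a_j = r^d}). Define β̇(t) = ½ (Σ_j a_j'(t)²/a_j(t)²) / (Σ_j a_j(t)^{−2}), β(t) = ∫_0^t β̇(s) ds, φ(x,t) = ½ Σ_j a_j'(t) x_j² / a_j(t) − β(t), p(x,t) = β̇(t) (1 − Σ_j x_j²/a_j(t)²), and the open ellipsoid E_{a(t)} = {x ∈ ℝ^d : Σ_j x_j²/a_j(t)²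 < 1}. Then: (i) a_j(t)·a_j''(t) = 2β̇(t) for all j and t; (ii) Δ_x φ(·,t) = 0 on ℝ^d for every t; (iii) ∂_t φ(x,t) + ½ |∇_x φ(x,t)|² + p(x,t) = 0 for all (x,t); (iv) p(x,t) = 0 for every x with Σ_j x_j²/a_j(t)² = 1, and p(x,t) ≥ 0 for x ∈ E_{a(t)}; (v) the flow X(z,t) = (a_1(t) z_1/a_1(0), …, a_d(t) z_d/a_d(0)) satisfies X(z,0) = z, ∂_t X(z,t) = ∇_x φ(X(z,t), t), and X(E_{a(0)}, t) = E_{a(t)} for every t. In particular, (E_{a(·)}, X, φ, p) constitutes a smooth Euler droplet solution with ellipsoidal fluid domains. -/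
/-!
The constraint `∏ aⱼ = r^d` says that `∑ log aⱼ` is constant on `[0,1]`. Differentiating once
gives `∑ aⱼ'/aⱼ = 0`, which is the Laplacian of `φ(·,t)`; differentiating twice gives
`∑ (aⱼ''aⱼ - aⱼ'²)/aⱼ² = 0`, and since `aⱼaⱼ''` is the same number `κ` for every `j`, this solves to
`κ = (∑ aⱼ'²/aⱼ²)/(∑ aⱼ⁻²) = 2β̇`. Bernoulli's equation then holds coefficientwise in the `xⱼ²`.
The flow is the diagonal linear map `zⱼ ↦ aⱼ(t)zⱼ/aⱼ(0)`, whose velocity `aⱼ'zⱼ/aⱼ(0)` is `∇φ` at the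
image point.
-/

open Set

theorem HasDerivAt.eq_zero_of_eqOn_Icc {f : ℝ → ℝ} {f' c t₀ t₁ t : ℝ} (hlt : t₀ < t₁)
    (hf : HasDerivAt f f' t) (hc : EqOn f (fun _ => c) (Icc t₀ t₁)) (ht : t ∈ Icc t₀ t₁) :
    f' = 0 :=
  (uniqueDiffOn_Icc hlt t ht).eq_deriv _ hf.hasDerivWithinAt
    ((hasDerivWithinAt_const t _ c).congr hc (hc ht))

theorem hasDerivAt_integral_of_continuousOn {f : ℝ → ℝ} {U : Set ℝ} (hU : IsOpen U)
    (hf : ContinuousOn f U) {t₀ t : ℝ} (hsub : uIcc t₀ t ⊆ U) :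
    HasDerivAt (fun u => ∫ s in t₀..u, f s) (f t) t :=
  have ht : t ∈ U := hsub right_mem_uIcc
  intervalIntegral.integral_hasDerivAt_right ((hf.mono hsub).intervalIntegrable)
    (hf.stronglyMeasurableAtFilter hU t ht) (hf.continuousAt (hU.mem_nhds ht))

section VolumePreserving

variable {ι : Type*} [Fintype ι] {a : ℝ → ι → ℝ} {t₀ t₁ V t : ℝ}

theorem sum_deriv_div_eq_zero_of_prod_eq (hlt : t₀ < t₁)
    (ha : ∀ j, Differentiable ℝ fun s => a s j) (hpos : ∀ s ∈ Icc t₀ t₁, ∀ j, 0 < a s j)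
    (hvol : ∀ s ∈ Icc t₀ t₁, ∏ j, a s j = V) (ht : t ∈ Icc t₀ t₁) :
    ∑ j, deriv (fun s => a s j) t / a t j = 0 := by
  have hlog : HasDerivAt (fun s => ∑ j, Real.log (a s j))
      (∑ j, deriv (fun s => a s j) t / a t j) t :=
    HasDerivAt.fun_sum fun j _ => (ha j t).hasDerivAt.log (hpos t ht j).ne'
  refine hlog.eq_zero_of_eqOn_Icc hlt (c := Real.log V) (fun s hs => ?_) ht
  rw [← hvol s hs, Real.log_prod fun j _ => (hpos s hs j).ne']

theorem sum_deriv_deriv_mul_sub_sq_div_eq_zero_of_prod_eq (hlt : t₀ < t₁)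
    (ha : ∀ j, ContDiff ℝ 2 fun s => a s j) (hpos : ∀ s ∈ Icc t₀ t₁, ∀ j, 0 < a s j)
    (hvol : ∀ s ∈ Icc t₀ t₁, ∏ j, a s j = V) (ht : t ∈ Icc t₀ t₁) :
    ∑ j, (deriv (deriv fun s => a s j) t * a t j - deriv (fun s => a s j) t ^ 2) / a t j ^ 2
      = 0 := by
  have hdiff : ∀ j, Differentiable ℝ fun s => a s j :=
    fun j => (ha j).differentiable (by norm_num)
  have hsum : HasDerivAt (fun u => ∑ j, deriv (fun s => a s j) u / a u j)
      (∑ j, (deriv (deriv fun s => a s j) t * a t j - deriv (fun s => a s j) t ^ 2) /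
        a t j ^ 2) t := by
    refine HasDerivAt.fun_sum fun j _ => ?_
    exact (((ha j).differentiable_deriv_two t).hasDerivAt.fun_div (hdiff j t).hasDerivAt
      (hpos t ht j).ne').congr_deriv (by ring)
  exact hsum.eq_zero_of_eqOn_Icc hlt
    (fun s hs => sum_deriv_div_eq_zero_of_prod_eq hlt hdiff hpos hvol hs) ht

end VolumePreserving

theorem mul_eq_sum_div_sum_of_sum_eq_zero {ι : Type*} [Fintype ι] {x v w : ι → ℝ}
    (hx : ∀ j, x j ≠ 0) (hw : ∀ i j, x i * w i = x j * w j)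
    (hsum : ∑ i, (w i * x i - v i ^ 2) / x i ^ 2 = 0) (j : ι) :
    x j * w j = (∑ i, v i ^ 2 / x i ^ 2) / ∑ i, (x i ^ 2)⁻¹ := by
  have hS : 0 < ∑ i, (x i ^ 2)⁻¹ :=
    Finset.sum_pos (fun i _ => by have := hx i; positivity) ⟨j, Finset.mem_univ j⟩
  have hterm : ∀ i, (w i * x i - v i ^ 2) / x i ^ 2
      = x j * w j * (x i ^ 2)⁻¹ - v i ^ 2 / x i ^ 2 := fun i => by
    have := hx i
    field_simp
    linear_combination hw i j
  rw [Finset.sum_congr rfl fun i _ => hterm i, Finset.sum_sub_distrib, ← Finset.mul_sum,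
    sub_eq_zero] at hsum
  rw [eq_div_iff hS.ne', hsum]

section DiagonalQuadratic

variable {ι : Type*} [Fintype ι]

theorem hasGradientAt_half_sum_mul_sq_sub (c : ι → ℝ) (b : ℝ) (x : EuclideanSpace ℝ ι) :
    HasGradientAt (fun y : EuclideanSpace ℝ ι => (1/2) * ∑ j, c j * y j ^ 2 - b)
      (WithLp.toLp 2 fun j => c j * x j) x := by
  have hproj : ∀ j, HasFDerivAt (fun y : EuclideanSpace ℝ ι => y j)
      (EuclideanSpace.proj (𝕜 := ℝ) j) x := fun j => (EuclideanSpace.proj (𝕜 := ℝ) j).hasFDerivAt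
  have hsum := HasFDerivAt.fun_sum (u := Finset.univ) fun j _ => ((hproj j).pow 2).const_mul (c j)
  rw [hasGradientAt_iff_hasFDerivAt]
  refine ((hsum.const_mul (1/2)).sub_const b).congr_fderiv (ContinuousLinearMap.ext fun v => ?_)
  simp only [one_div, Nat.add_one_sub_one, pow_one, nsmul_eq_mul, Nat.cast_ofNat, smul_apply,
    sum_apply, PiLp.proj_apply, smul_eq_mul, Finset.mul_sum, InnerProductSpace.toDual_apply_apply,
    PiLp.inner_apply, RCLike.inner_apply, Real.ringHom_apply]
  exact Finset.sum_congr rfl fun j _ => by ring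

theorem sum_fderiv_fderiv_single_eq_sum [DecidableEq ι] {f : EuclideanSpace ℝ ι → ℝ}
    {c : ι → ℝ} (hf : ∀ y, HasGradientAt f (WithLp.toLp 2 fun j => c j * y j) y)
    (x : EuclideanSpace ℝ ι) :
    ∑ j, fderiv ℝ (fun y => fderiv ℝ f y (EuclideanSpace.single j 1)) x
      (EuclideanSpace.single j 1) = ∑ j, c j := by
  have hpartial : ∀ j, (fun y => fderiv ℝ f y (EuclideanSpace.single j 1))
      = fun y => c j * y j := fun j => funext fun y => by
    rw [(hf y).hasFDerivAt.fderiv, InnerProductSpace.toDual_apply_apply,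
      EuclideanSpace.inner_single_right]
    simp
  refine Finset.sum_congr rfl fun j _ => ?_
  have hlin : HasFDerivAt (fun y : EuclideanSpace ℝ ι => c j * y j)
      (c j • EuclideanSpace.proj j) x :=
    (EuclideanSpace.proj (𝕜 := ℝ) j).hasFDerivAt.const_mul (c j)
  rw [hpartial, hlin.fderiv]
  simp

def ellipsoid (b : ι → ℝ) : Set (EuclideanSpace ℝ ι) := {x | ∑ j, (x j / b j) ^ 2 < 1}

theorem image_ellipsoid {b c : ι → ℝ} (hb : ∀ j, b j ≠ 0) (hc : ∀ j, c j ≠ 0) :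
    (fun z : EuclideanSpace ℝ ι => WithLp.toLp 2 fun j => c j * z j / b j) '' ellipsoid b
      = ellipsoid c := by
  ext x
  constructor
  · rintro ⟨z, hz, rfl⟩
    simpa only [ellipsoid, mem_ofPred_eq, mul_div_assoc, mul_div_cancel_left₀ _ (hc _)] using hz
  · intro hx
    refine ⟨WithLp.toLp 2 fun j => b j * x j / c j, ?_, ?_⟩
    · simpa only [ellipsoid, mem_ofPred_eq, mul_div_assoc, mul_div_cancel_left₀ _ (hb _)] using hx
    · ext j
      field_simp [hb j, hc j]

end DiagonalQuadratic

namespace EllipsoidalDroplet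

variable {ι : Type*} {a : ℝ → ι → ℝ} {t : ℝ}

noncomputable def flow (a : ℝ → ι → ℝ) (z : EuclideanSpace ℝ ι) (t : ℝ) : EuclideanSpace ℝ ι :=
  WithLp.toLp 2 fun j => a t j * z j / a 0 j

theorem flow_zero (h0 : ∀ j, a 0 j ≠ 0) (z : EuclideanSpace ℝ ι) : flow a z 0 = z := by
  ext j
  simp [flow, h0 j]

variable [Fintype ι]

noncomputable section

def betaDot (a : ℝ → ι → ℝ) (t : ℝ) : ℝ :=
  (1/2) * (∑ j, (deriv (fun s => a s j) t) ^ 2 / (a t j) ^ 2) / (∑ j, ((a t j) ^ 2)⁻¹)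

def beta (a : ℝ → ι → ℝ) (t : ℝ) : ℝ := ∫ s in (0:ℝ)..t, betaDot a s

def potential (a : ℝ → ι → ℝ) (x : EuclideanSpace ℝ ι) (t : ℝ) : ℝ :=
  (1/2) * (∑ j, deriv (fun s => a s j) t * (x j) ^ 2 / a t j) - beta a t

def pressure (a : ℝ → ι → ℝ) (x : EuclideanSpace ℝ ι) (t : ℝ) : ℝ :=
  betaDot a t * (1 - ∑ j, (x j) ^ 2 / (a t j) ^ 2)

end

theorem betaDot_nonneg (a : ℝ → ι → ℝ) (t : ℝ) : 0 ≤ betaDot a t := by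
  unfold betaDot
  positivity

theorem continuousOn_betaDot [Nonempty ι] (ha : ContDiff ℝ 1 a) :
    ContinuousOn (betaDot a) {t | ∀ j, 0 < a t j} := by
  have hcomp : ∀ j, ContDiff ℝ 1 fun s => a s j := contDiff_pi.mp ha
  have hne : ∀ j, ∀ t ∈ {t | ∀ j, 0 < a t j}, a t j ^ 2 ≠ 0 := fun j t ht =>
    pow_ne_zero 2 (ht j).ne'
  refine ContinuousOn.div (continuousOn_const.mul (continuousOn_finsetSum _ fun j _ => ?_))
    (continuousOn_finsetSum _ fun j _ => ?_) fun t ht => ?_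
  · exact (((hcomp j).continuous_deriv_one.pow 2).continuousOn).div
      ((hcomp j).continuous.pow 2).continuousOn (hne j)
  · exact ((hcomp j).continuous.pow 2).continuousOn.inv₀ (hne j)
  · have : ∀ j, 0 < (a t j ^ 2)⁻¹ := fun j => by have := ht j; positivity
    exact (Finset.sum_pos (fun j _ => this j) Finset.univ_nonempty).ne'

theorem hasDerivAt_beta [Nonempty ι] (ha : ContDiff ℝ 1 a)
    (hpos : ∀ s ∈ uIcc 0 t, ∀ j, 0 < a s j) : HasDerivAt (beta a) (betaDot a t) t := by
  have hopen : IsOpen {t | ∀ j, 0 < a t j} := by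
    simp only [ofPred_forall]
    exact isOpen_iInter_of_finite fun j =>
      isOpen_lt continuous_const ((contDiff_pi.mp ha j).continuous)
  exact hasDerivAt_integral_of_continuousOn hopen (continuousOn_betaDot ha) hpos

theorem mul_deriv_deriv_eq_two_mul_betaDot {t₀ t₁ V : ℝ} (hlt : t₀ < t₁) (ha : ContDiff ℝ 2 a)
    (hpos : ∀ s ∈ Icc t₀ t₁, ∀ j, 0 < a s j) (hvol : ∀ s ∈ Icc t₀ t₁, ∏ j, a s j = V)
    (hgeo : ∀ i j, a t i * deriv (deriv fun s => a s i) t = a t j * deriv (deriv fun s => a s j) t)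
    (ht : t ∈ Icc t₀ t₁) (j : ι) :
    a t j * deriv (deriv fun s => a s j) t = 2 * betaDot a t := by
  rw [mul_eq_sum_div_sum_of_sum_eq_zero (fun i => (hpos t ht i).ne') hgeo
    (sum_deriv_deriv_mul_sub_sq_div_eq_zero_of_prod_eq hlt (contDiff_pi.mp ha) hpos hvol ht) j,
    betaDot]
  ring

theorem hasGradientAt_potential (a : ℝ → ι → ℝ) (t : ℝ) (x : EuclideanSpace ℝ ι) :
    HasGradientAt (fun y => potential a y t)
      (WithLp.toLp 2 fun j => deriv (fun s => a s j) t / a t j * x j) x := by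
  refine (hasGradientAt_half_sum_mul_sq_sub _ (beta a t) x).congr_of_eventuallyEq
    (Filter.Eventually.of_forall fun y => ?_)
  simp only [potential]
  congr 2
  exact Finset.sum_congr rfl fun j _ => by ring

theorem sum_fderiv_fderiv_potential_eq_zero [DecidableEq ι] {t₀ t₁ V : ℝ} (hlt : t₀ < t₁)
    (ha : ∀ j, Differentiable ℝ fun s => a s j) (hpos : ∀ s ∈ Icc t₀ t₁, ∀ j, 0 < a s j)
    (hvol : ∀ s ∈ Icc t₀ t₁, ∏ j, a s j = V) (ht : t ∈ Icc t₀ t₁) (x : EuclideanSpace ℝ ι) :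
    ∑ j, fderiv ℝ (fun y => fderiv ℝ (fun y' => potential a y' t) y
      (EuclideanSpace.single j 1)) x (EuclideanSpace.single j 1) = 0 :=
  (sum_fderiv_fderiv_single_eq_sum (hasGradientAt_potential a t) x).trans
    (sum_deriv_div_eq_zero_of_prod_eq hlt ha hpos hvol ht)

theorem hasDerivAt_potential (ha : ContDiff ℝ 2 a) (hne : ∀ j, a t j ≠ 0)
    (hβ : HasDerivAt (beta a) (betaDot a t) t) (x : EuclideanSpace ℝ ι) :
    HasDerivAt (potential a x)
      ((1/2) * ∑ j, (deriv (deriv fun s => a s j) t * a t j - deriv (fun s => a s j) t ^ 2) *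
        x j ^ 2 / a t j ^ 2 - betaDot a t) t := by
  refine (HasDerivAt.const_mul _ (HasDerivAt.fun_sum fun j _ => ?_)).sub hβ
  have hda' := (contDiff_pi.mp ha j).differentiable_deriv_two t
  have hda := (contDiff_pi.mp ha j).differentiable (by norm_num) t
  exact ((hda'.hasDerivAt.mul_const (x j ^ 2)).fun_div hda.hasDerivAt (hne j)).congr_deriv
    (by ring)

theorem deriv_potential_add_half_norm_gradient_sq_add_pressure (ha : ContDiff ℝ 2 a)
    (hne : ∀ j, a t j ≠ 0) (hβ : HasDerivAt (beta a) (betaDot a t) t)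
    (hK : ∀ j, a t j * deriv (deriv fun s => a s j) t = 2 * betaDot a t)
    (x : EuclideanSpace ℝ ι) :
    deriv (potential a x) t + (1/2) * ‖gradient (fun y => potential a y t) x‖ ^ 2
      + pressure a x t = 0 := by
  have hterm : ∀ j, (1/2) * ((deriv (deriv fun s => a s j) t * a t j -
        deriv (fun s => a s j) t ^ 2) * x j ^ 2 / a t j ^ 2)
      + (1/2) * (deriv (fun s => a s j) t / a t j * x j) ^ 2
      - betaDot a t * (x j ^ 2 / a t j ^ 2) = 0 := fun j => by
    have := hne j
    field_simp
    linear_combination x j ^ 2 * hK j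
  have hsum := Finset.sum_eq_zero (s := Finset.univ) fun j _ => hterm j
  rw [Finset.sum_sub_distrib, Finset.sum_add_distrib, ← Finset.mul_sum, ← Finset.mul_sum,
    ← Finset.mul_sum] at hsum
  rw [(hasDerivAt_potential ha hne hβ x).deriv, (hasGradientAt_potential a t x).gradient,
    EuclideanSpace.real_norm_sq_eq, pressure]
  linear_combination hsum

theorem hasDerivAt_flow (ha : ∀ j, DifferentiableAt ℝ (fun s => a s j) t) (hne : ∀ j, a t j ≠ 0)
    (z : EuclideanSpace ℝ ι) :
    HasDerivAt (flow a z) (gradient (fun y => potential a y t) (flow a z t)) t := by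
  have hcomp : HasDerivAt (fun s j => a s j * z j / a 0 j)
      (fun j => deriv (fun s => a s j) t * z j / a 0 j) t :=
    hasDerivAt_pi.mpr fun j => ((ha j).hasDerivAt.mul_const (z j)).div_const (a 0 j)
  refine ((PiLp.hasFDerivAt_toLp (𝕜 := ℝ) 2 _).comp_hasDerivAt t hcomp).congr_deriv ?_
  rw [(hasGradientAt_potential a t _).gradient]
  ext j
  simp only [ContinuousLinearEquiv.coe_coe, PiLp.continuousLinearEquiv_symm_apply, flow]
  field_simp [hne j]

end EllipsoidalDroplet

open EllipsoidalDroplet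

theorem ellipsoidal_euler_droplet_general
    (d : ℕ) (hd : 1 ≤ d) (r : ℝ)
    (a : ℝ → Fin d → ℝ) (ha : ContDiff ℝ 2 a)
    (hpos : ∀ t ∈ Icc (0:ℝ) 1, ∀ j, 0 < a t j)
    (hvol : ∀ t ∈ Icc (0:ℝ) 1, ∏ j, a t j = r ^ d)
    (hgeo : ∀ t ∈ Icc (0:ℝ) 1, ∀ i j,
      a t i * deriv (deriv fun s => a s i) t = a t j * deriv (deriv fun s => a s j) t)
    (betadot : ℝ → ℝ)
    (hbetadot : ∀ t, betadot t =
      (1/2) * (∑ j, (deriv (fun s => a s j) t) ^ 2 / (a t j) ^ 2) /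
        (∑ j, ((a t j) ^ 2)⁻¹))
    (β : ℝ → ℝ) (hβ : ∀ t, β t = ∫ s in (0:ℝ)..t, betadot s)
    (φ : EuclideanSpace ℝ (Fin d) → ℝ → ℝ)
    (hφ : ∀ x t, φ x t =
      (1/2) * (∑ j, deriv (fun s => a s j) t * (x j) ^ 2 / a t j) - β t)
    (p : EuclideanSpace ℝ (Fin d) → ℝ → ℝ)
    (hp : ∀ x t, p x t = betadot t * (1 - ∑ j, (x j) ^ 2 / (a t j) ^ 2))
    (X : EuclideanSpace ℝ (Fin d) → ℝ → EuclideanSpace ℝ (Fin d))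
    (hX : ∀ z t j, X z t j = a t j * z j / a 0 j) :
    -- (i) common value of aⱼ·aⱼ''
    (∀ t ∈ Icc (0:ℝ) 1, ∀ j,
      a t j * deriv (deriv fun s => a s j) t = 2 * betadot t) ∧
    -- (ii) φ(·,t) is harmonic on all of ℝ^d
    (∀ t ∈ Icc (0:ℝ) 1, ∀ x : EuclideanSpace ℝ (Fin d),
      (∑ j, fderiv ℝ
          (fun y => fderiv ℝ (fun y' => φ y' t) y (EuclideanSpace.single j (1:ℝ))) x
          (EuclideanSpace.single j (1:ℝ))) = 0) ∧
    -- (iii) the Bernoulli equation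
    (∀ t ∈ Icc (0:ℝ) 1, ∀ x : EuclideanSpace ℝ (Fin d),
      deriv (fun s => φ x s) t + (1/2) * ‖gradient (fun y => φ y t) x‖ ^ 2 + p x t
        = 0) ∧
    -- (iv) the pressure vanishes on the boundary ellipsoid and is nonnegative inside
    (∀ t ∈ Icc (0:ℝ) 1, ∀ x : EuclideanSpace ℝ (Fin d),
      ((∑ j, (x j) ^ 2 / (a t j) ^ 2) = 1 → p x t = 0) ∧
      ((∑ j, (x j) ^ 2 / (a t j) ^ 2) < 1 → 0 ≤ p x t)) ∧
    -- (v) the dilational flow solves the ODE and deforms ellipsoids to ellipsoids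
    (∀ z, X z 0 = z) ∧
    (∀ z : EuclideanSpace ℝ (Fin d), ∀ t ∈ Icc (0:ℝ) 1,
      HasDerivAt (fun s => X z s) (gradient (fun y => φ y t) (X z t)) t) ∧
    (∀ t ∈ Icc (0:ℝ) 1,
      (fun z => X z t) ''
          {x : EuclideanSpace ℝ (Fin d) | ∑ j, (x j / a 0 j) ^ 2 < 1} =
        {x : EuclideanSpace ℝ (Fin d) | ∑ j, (x j / a t j) ^ 2 < 1}) := by
  obtain rfl : betadot = betaDot a := funext hbetadot
  obtain rfl : β = beta a := funext hβ
  obtain rfl : φ = potential a := funext fun x => funext (hφ x)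
  obtain rfl : p = pressure a := funext fun x => funext (hp x)
  obtain rfl : X = flow a := funext fun z => funext fun t => PiLp.ext (hX z t)
  have : Nonempty (Fin d) := ⟨⟨0, hd⟩⟩
  have hne : ∀ t ∈ Icc (0:ℝ) 1, ∀ j, a t j ≠ 0 := fun t ht j => (hpos t ht j).ne'
  have hdiff : ∀ j, Differentiable ℝ fun s => a s j :=
    fun j => (contDiff_pi.mp ha j).differentiable (by norm_num)
  have hK : ∀ t ∈ Icc (0:ℝ) 1, ∀ j, a t j * deriv (deriv fun s => a s j) t = 2 * betaDot a t :=
    fun t ht => mul_deriv_deriv_eq_two_mul_betaDot zero_lt_one ha hpos hvol (hgeo t ht) ht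
  have hβ' : ∀ t ∈ Icc (0:ℝ) 1, HasDerivAt (beta a) (betaDot a t) t := fun t ht =>
    hasDerivAt_beta (ha.of_le one_le_two) fun s hs =>
      hpos s (Icc_subset_Icc le_rfl ht.2 (uIcc_of_le ht.1 ▸ hs))
  refine ⟨hK, fun t ht x => sum_fderiv_fderiv_potential_eq_zero zero_lt_one hdiff hpos hvol ht x,
    fun t ht x => deriv_potential_add_half_norm_gradient_sq_add_pressure ha (hne t ht) (hβ' t ht)
      (hK t ht) x,
    fun t ht x => ⟨fun h => by simp [pressure, h],
      fun h => mul_nonneg (betaDot_nonneg a t) (by linarith)⟩,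
    flow_zero (hne 0 (left_mem_Icc.mpr zero_le_one)),
    fun z t ht => hasDerivAt_flow (fun j => hdiff j t) (hne t ht) z,
    fun t ht => image_ellipsoid (hne 0 (left_mem_Icc.mpr zero_le_one)) (hne t ht)⟩

/-- **Proposition 3.3.** Ellipsoidal Euler droplets: if
`a : [0,1] → (0,∞)^d` is a `C²` geodesic on the constant-volume surface
`{∏ⱼ aⱼ = r^d}` (i.e. `aⱼ·aⱼ''` independent of `j`), then with
`β̇(t) = ½(∑ⱼ aⱼ'²/aⱼ²)/(∑ⱼ aⱼ⁻²)`, `β(t) = ∫₀ᵗ β̇`,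
`φ(x,t) = ½∑ⱼ aⱼ'xⱼ²/aⱼ − β(t)`, `p(x,t) = β̇(t)(1 − ∑ⱼ xⱼ²/aⱼ²)`:
(i) `aⱼ aⱼ'' = 2β̇`; (ii) `φ(·,t)` is harmonic; (iii) the Bernoulli equation
`∂ₜφ + ½|∇ₓφ|² + p = 0` holds; (iv) `p = 0` on the boundary ellipsoid and `p ≥ 0`
inside; and (v) the dilational flow `X(z,t)ⱼ = aⱼ(t)zⱼ/aⱼ(0)` satisfies `X(·,0) = id`,
`∂ₜX = ∇ₓφ(X,t)`, and carries the ellipsoid `E_{a(0)}` onto `E_{a(t)}`. -/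
theorem ellipsoidal_euler_droplet
    (d : ℕ) (hd : 1 ≤ d) (r : ℝ) (hr : 0 < r)
    (a : ℝ → Fin d → ℝ) (ha : ContDiff ℝ 2 a)
    (hpos : ∀ t ∈ Icc (0:ℝ) 1, ∀ j, 0 < a t j)
    (hvol : ∀ t ∈ Icc (0:ℝ) 1, ∏ j, a t j = r ^ d)
    (hgeo : ∀ t ∈ Icc (0:ℝ) 1, ∀ i j,
      a t i * deriv (deriv fun s => a s i) t = a t j * deriv (deriv fun s => a s j) t)
    (betadot : ℝ → ℝ)
    (hbetadot : ∀ t, betadot t =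
      (1/2) * (∑ j, (deriv (fun s => a s j) t) ^ 2 / (a t j) ^ 2) /
        (∑ j, ((a t j) ^ 2)⁻¹))
    (β : ℝ → ℝ) (hβ : ∀ t, β t = ∫ s in (0:ℝ)..t, betadot s)
    (φ : EuclideanSpace ℝ (Fin d) → ℝ → ℝ)
    (hφ : ∀ x t, φ x t =
      (1/2) * (∑ j, deriv (fun s => a s j) t * (x j) ^ 2 / a t j) - β t)
    (p : EuclideanSpace ℝ (Fin d) → ℝ → ℝ)
    (hp : ∀ x t, p x t = betadot t * (1 - ∑ j, (x j) ^ 2 / (a t j) ^ 2))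
    (X : EuclideanSpace ℝ (Fin d) → ℝ → EuclideanSpace ℝ (Fin d))
    (hX : ∀ z t j, X z t j = a t j * z j / a 0 j) :
    -- (i) common value of aⱼ·aⱼ''
    (∀ t ∈ Icc (0:ℝ) 1, ∀ j,
      a t j * deriv (deriv fun s => a s j) t = 2 * betadot t) ∧
    -- (ii) φ(·,t) is harmonic on all of ℝ^d
    (∀ t ∈ Icc (0:ℝ) 1, ∀ x : EuclideanSpace ℝ (Fin d),
      (∑ j, fderiv ℝ
          (fun y => fderiv ℝ (fun y' => φ y' t) y (EuclideanSpace.single j (1:ℝ))) x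
          (EuclideanSpace.single j (1:ℝ))) = 0) ∧
    -- (iii) the Bernoulli equation
    (∀ t ∈ Icc (0:ℝ) 1, ∀ x : EuclideanSpace ℝ (Fin d),
      deriv (fun s => φ x s) t + (1/2) * ‖gradient (fun y => φ y t) x‖ ^ 2 + p x t
        = 0) ∧
    -- (iv) the pressure vanishes on the boundary ellipsoid and is nonnegative inside
    (∀ t ∈ Icc (0:ℝ) 1, ∀ x : EuclideanSpace ℝ (Fin d),
      ((∑ j, (x j) ^ 2 / (a t j) ^ 2) = 1 → p x t = 0) ∧
      ((∑ j, (x j) ^ 2 / (a t j) ^ 2) < 1 → 0 ≤ p x t)) ∧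
    -- (v) the dilational flow solves the ODE and deforms ellipsoids to ellipsoids
    (∀ z, X z 0 = z) ∧
    (∀ z : EuclideanSpace ℝ (Fin d), ∀ t ∈ Icc (0:ℝ) 1,
      HasDerivAt (fun s => X z s) (gradient (fun y => φ y t) (X z t)) t) ∧
    (∀ t ∈ Icc (0:ℝ) 1,
      (fun z => X z t) ''
          {x : EuclideanSpace ℝ (Fin d) | ∑ j, (x j / a 0 j) ^ 2 < 1} =
        {x : EuclideanSpace ℝ (Fin d) | ∑ j, (x j / a t j) ^ 2 < 1}) :=
  ellipsoidal_euler_droplet_general d hd r a ha hpos hvol hgeo betadot hbetadot β hβ φ hφ p hp X hX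
end

section
/- Let d ≥ 1, r > 0, and let a : [0,1] → (0,∞)^d be a C² curve with ∏_{j=1}^d a_j(t) = r^d for all t and with a_j(t)·a_j''(t) independent of j. Then each component a_j is a convex function on [0,1]. Consequently, setting A_j(t) = (1−t)·a_j(0) + t·a_j(1), one has a_j(t) ≤ A_j(t) for all t ∈ [0,1] and all j, and hence the ellipsoids remain nested: E_{a(t)} ⊆ E_{A(t)} for all t ∈ [0,1], where E_b = {x ∈ ℝ^d : Σ_j (x_j/b_j)² < 1} for b ∈ (0,∞)^d. -/
/-!
Along the curve the product `∏ⱼ aⱼ` is constant, so `∑ⱼ aⱼ'/aⱼ = 0`; differentiating once more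
and writing `c = aⱼ aⱼ''` gives `c ∑ⱼ aⱼ⁻² = ∑ⱼ (aⱼ'/aⱼ)² ≥ 0`. Hence `c ≥ 0`, so every
`aⱼ'' = c / aⱼ` is nonnegative and each `aⱼ` is convex. Convexity puts `aⱼ(t)` below the chord
`Aⱼ(t)`, and shrinking the semi-axes of an ellipsoid shrinks the ellipsoid.
-/

open Set

theorem nonneg_of_sum_sub_sq_div_sq_eq_zero {ι : Type*} {s : Finset ι} (hs : s.Nonempty)
    {x y : ι → ℝ} {c : ℝ} (hx : ∀ i ∈ s, x i ≠ 0) (h : ∑ i ∈ s, (c - y i ^ 2) / x i ^ 2 = 0) : 0 ≤ c := by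
  by_contra! hc
  have hneg : ∑ i ∈ s, (c - y i ^ 2) / x i ^ 2 < 0 :=
    Finset.sum_neg (fun i hi => div_neg_of_neg_of_pos (by nlinarith [sq_nonneg (y i)])
      (sq_pos_of_ne_zero (hx i hi))) hs
  exact hneg.ne h

section ConstantProduct

variable {ι : Type*} [Fintype ι] {f : ι → ℝ → ℝ} {U : Set ℝ} {C : ℝ}

theorem sum_logDeriv_eq_zero_of_prod_eq_const (hU : IsOpen U) (hf : ∀ i, Differentiable ℝ (f i))
    (hne : ∀ s ∈ U, ∀ i, f i s ≠ 0) (hprod : ∀ s ∈ U, ∏ i, f i s = C) {s : ℝ} (hs : s ∈ U) :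
    ∑ i, logDeriv (f i) s = 0 := by
  have hconst : (fun u => ∏ i, f i u) =ᶠ[nhds s] fun _ => C :=
    Filter.eventually_of_mem (hU.mem_nhds hs) hprod
  rw [← logDeriv_prod (fun i _ => hne s hs i) (fun i _ => (hf i).differentiableAt),
    logDeriv_apply, hconst.deriv_eq, deriv_const, zero_div]

theorem hasDerivAt_sum_logDeriv (hf : ∀ i, Differentiable ℝ (f i))
    (hf' : ∀ i, Differentiable ℝ (deriv (f i))) {t : ℝ} (hne : ∀ i, f i t ≠ 0) :
    HasDerivAt (fun s => ∑ i, logDeriv (f i) s)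
      (∑ i, (deriv (deriv (f i)) t * f i t - deriv (f i) t * deriv (f i) t) / f i t ^ 2) t :=
  HasDerivAt.fun_sum fun i _ => ((hf' i t).hasDerivAt).div ((hf i t).hasDerivAt) (hne i)

theorem deriv2_nonneg_of_prod_eq_const_of_mul_deriv2_eq [Nonempty ι] (hU : IsOpen U)
    (hf : ∀ i, Differentiable ℝ (f i)) (hf' : ∀ i, Differentiable ℝ (deriv (f i)))
    (hpos : ∀ s ∈ U, ∀ i, 0 < f i s) (hprod : ∀ s ∈ U, ∏ i, f i s = C)
    (hgeo : ∀ s ∈ U, ∀ i j, f i s * deriv (deriv (f i)) s = f j s * deriv (deriv (f j)) s)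
    {t : ℝ} (ht : t ∈ U) (j : ι) : 0 ≤ deriv (deriv (f j)) t := by
  have hne : ∀ s ∈ U, ∀ i, f i s ≠ 0 := fun s hs i => (hpos s hs i).ne'
  have hlocal : (fun s => ∑ i, logDeriv (f i) s) =ᶠ[nhds t] fun _ => 0 :=
    Filter.eventually_of_mem (hU.mem_nhds ht) fun s hs =>
      sum_logDeriv_eq_zero_of_prod_eq_const hU hf hne hprod hs
  have hsum : ∑ i, (deriv (deriv (f i)) t * f i t - deriv (f i) t * deriv (f i) t) / f i t ^ 2
      = 0 := by
    rw [← (hasDerivAt_sum_logDeriv hf hf' (hne t ht)).deriv, hlocal.deriv_eq, deriv_const]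
  have hc : 0 ≤ f j t * deriv (deriv (f j)) t := by
    refine nonneg_of_sum_sub_sq_div_sq_eq_zero Finset.univ_nonempty (y := fun i => deriv (f i) t)
      (fun i _ => hne t ht i) (hsum ▸ Finset.sum_congr rfl fun i _ => ?_)
    rw [mul_comm _ (f i t), hgeo t ht i j, sq]
  exact nonneg_of_mul_nonneg_right hc (hpos t ht j)

end ConstantProduct

theorem ConvexOn.le_chord_of_mem_Icc {f : ℝ → ℝ} (hf : ConvexOn ℝ (Icc 0 1) f) {t : ℝ}
    (ht : t ∈ Icc (0 : ℝ) 1) : f t ≤ (1 - t) * f 0 + t * f 1 := by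
  simpa using hf.2 (left_mem_Icc.mpr zero_le_one) (right_mem_Icc.mpr zero_le_one)
    (sub_nonneg.mpr ht.2) ht.1 (sub_add_cancel 1 t)

theorem sum_div_sq_le_sum_div_sq {ι : Type*} [Fintype ι] (x b B : ι → ℝ) (hb : ∀ i, 0 < b i)
    (hbB : ∀ i, b i ≤ B i) : ∑ i, (x i / B i) ^ 2 ≤ ∑ i, (x i / b i) ^ 2 :=
  Finset.sum_le_sum fun i _ => by
    rw [div_pow, div_pow]
    exact div_le_div_of_nonneg_left (sq_nonneg _) (pow_pos (hb i) 2)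
      (pow_le_pow_left₀ (hb i).le (hbB i) 2)

theorem euler_droplet_nested_in_wasserstein_droplet_general
    (d : ℕ) (hd : 1 ≤ d) (r : ℝ)
    (a : ℝ → Fin d → ℝ) (ha : ContDiff ℝ 2 a)
    (hpos : ∀ t ∈ Icc (0:ℝ) 1, ∀ j, 0 < a t j)
    (hvol : ∀ t ∈ Icc (0:ℝ) 1, ∏ j, a t j = r ^ d)
    (hgeo : ∀ t ∈ Icc (0:ℝ) 1, ∀ i j,
      a t i * deriv (deriv fun s => a s i) t = a t j * deriv (deriv fun s => a s j) t) :
    (∀ j, ConvexOn ℝ (Icc (0:ℝ) 1) (fun t => a t j)) ∧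
    (∀ t ∈ Icc (0:ℝ) 1, ∀ j, a t j ≤ (1 - t) * a 0 j + t * a 1 j) ∧
    (∀ t ∈ Icc (0:ℝ) 1,
      {x : EuclideanSpace ℝ (Fin d) | ∑ j, (x j / a t j) ^ 2 < 1} ⊆
        {x : EuclideanSpace ℝ (Fin d) |
          ∑ j, (x j / ((1 - t) * a 0 j + t * a 1 j)) ^ 2 < 1}) := by
  have : Nonempty (Fin d) := Fin.pos_iff_nonempty.mp hd
  have hcomp : ∀ j, ContDiff ℝ 2 fun s => a s j := contDiff_pi.mp ha
  have hdiff : ∀ j, Differentiable ℝ fun s => a s j := fun j =>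
    (hcomp j).differentiable two_ne_zero
  have hdiff' : ∀ j, Differentiable ℝ (deriv fun s => a s j) := fun j =>
    (hcomp j).differentiable_deriv_two
  have hIoo : Ioo (0:ℝ) 1 ⊆ Icc 0 1 := Ioo_subset_Icc_self
  have hconv : ∀ j, ConvexOn ℝ (Icc (0:ℝ) 1) (fun t => a t j) := fun j =>
    convexOn_of_deriv2_nonneg (convex_Icc 0 1) (hdiff j).continuous.continuousOn
      (hdiff j).differentiableOn (hdiff' j).differentiableOn fun t ht => by
        rw [interior_Icc] at ht
        exact deriv2_nonneg_of_prod_eq_const_of_mul_deriv2_eq (f := fun j s => a s j) isOpen_Ioo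
          hdiff hdiff' (fun s hs => hpos s (hIoo hs)) (fun s hs => hvol s (hIoo hs))
          (fun s hs => hgeo s (hIoo hs)) ht j
  have hchord : ∀ t ∈ Icc (0:ℝ) 1, ∀ j, a t j ≤ (1 - t) * a 0 j + t * a 1 j := fun t ht j =>
    (hconv j).le_chord_of_mem_Icc ht
  exact ⟨hconv, hchord, fun t ht x hx =>
    (sum_div_sq_le_sum_div_sq _ _ _ (hpos t ht) (hchord t ht)).trans_lt hx⟩

/-- Along a geodesic `a` on the constant-volume surface
`{a ∈ (0,∞)^d : ∏ⱼ aⱼ = r^d}` (the equations `aⱼ·aⱼ''` independent of `j`), each component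
`aⱼ` is convex on `[0,1]`; hence `aⱼ(t) ≤ Aⱼ(t) := (1−t)aⱼ(0) + t aⱼ(1)`, and the
ellipsoids remain nested: `E_{a(t)} ⊆ E_{A(t)}` for all `t ∈ [0,1]`. -/
theorem euler_droplet_nested_in_wasserstein_droplet
    (d : ℕ) (hd : 1 ≤ d) (r : ℝ) (hr : 0 < r)
    (a : ℝ → Fin d → ℝ) (ha : ContDiff ℝ 2 a)
    (hpos : ∀ t ∈ Icc (0:ℝ) 1, ∀ j, 0 < a t j)
    (hvol : ∀ t ∈ Icc (0:ℝ) 1, ∏ j, a t j = r ^ d)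
    (hgeo : ∀ t ∈ Icc (0:ℝ) 1, ∀ i j,
      a t i * deriv (deriv fun s => a s i) t = a t j * deriv (deriv fun s => a s j) t) :
    (∀ j, ConvexOn ℝ (Icc (0:ℝ) 1) (fun t => a t j)) ∧
    (∀ t ∈ Icc (0:ℝ) 1, ∀ j, a t j ≤ (1 - t) * a 0 j + t * a 1 j) ∧
    (∀ t ∈ Icc (0:ℝ) 1,
      {x : EuclideanSpace ℝ (Fin d) | ∑ j, (x j / a t j) ^ 2 < 1} ⊆
        {x : EuclideanSpace ℝ (Fin d) |
          ∑ j, (x j / ((1 - t) * a 0 j + t * a 1 j)) ^ 2 < 1}) :=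
  euler_droplet_nested_in_wasserstein_droplet_general d hd r a ha hpos hvol hgeo
end

section
/- Let d ≥ 1, r > 0, b ∈ ℝ^d, and â ∈ (0,∞)^d with ∏_{j=1}^d â_j = r^d. Let B(0,r) ⊆ ℝ^d be the open ball of radius r, let E_â = {x : Σ_j (x_j/â_j)² < 1}, and let ω_d be the volume of the unit ball. Then the quadratic Wasserstein distance between the uniform measures satisfies d_W(1_{B(0,r)} dx, 1_{b+E_â} dx)² = ω_d r^d ( |b|² + |â − (r, …, r)|²/(d+2) ), and the infimum over couplings is attained by the coupling induced by the linear map x ↦ b + (â_1 x_1/r, …, â_d x_d/r), i.e. by the pushforward of 1_{B(0,r)} dx under x ↦ (x, b + (â_1 x_1/r, …, â_d x_d/r)). -/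
/-!
The linear map `S x = b + diag(âⱼ / r) x` has Jacobian `∏ âⱼ / rᵈ = 1` and maps `B(0, r)` onto
`b + E_â`, so it pushes the uniform measure on the ball to the one on the ellipsoid. Its cost
follows from the moments `∫_B xⱼ = 0` (symmetry `x ↦ -x`) and `∫_B xⱼ² = ω_d r^(d+2) / (d+2)`
(permuting coordinates reduces it to `∫_B |x|²`, computed in polar coordinates).

For optimality, `S = ∇u` with `u x = ⟪b, x⟫ + ∑ âⱼ xⱼ² / (2r)` convex, so the Fenchel–Young
inequality `⟪x, y⟫ ≤ u x + u* y`, an equality for `y = S x`, yields potentials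
`φ + ψ ≤ |x - y|²` with equality on the graph of `S`. Integrating against an arbitrary coupling
shows that no coupling beats the one induced by `S`.
-/

open Set MeasureTheory
open scoped ENNReal

/-- Squared quadratic Wasserstein cost between two measures on `ℝ^d`, as the infimum over
couplings of the integral of the squared distance. -/
noncomputable def W2sq {d : ℕ}
    (μ ν : Measure (EuclideanSpace ℝ (Fin d))) : ℝ≥0∞ :=
  sInf { C | ∃ π : Measure (EuclideanSpace ℝ (Fin d) × EuclideanSpace ℝ (Fin d)),
    π.map Prod.fst = μ ∧ π.map Prod.snd = ν ∧
    C = ∫⁻ q, ENNReal.ofReal (‖q.1 - q.2‖ ^ 2) ∂π }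

open Metric

section Duality

variable {X Y : Type*} [MeasurableSpace X] [MeasurableSpace Y]

theorem ofReal_integral_le_lintegral_ofReal {μ : Measure X} {f : X → ℝ} (hf : Integrable f μ) :
    ENNReal.ofReal (∫ x, f x ∂μ) ≤ ∫⁻ x, ENNReal.ofReal (f x) ∂μ := by
  rw [integral_eq_lintegral_pos_part_sub_lintegral_neg_part hf]
  exact (ENNReal.ofReal_le_ofReal (sub_le_self _ ENNReal.toReal_nonneg)).trans
    ENNReal.ofReal_toReal_le

/-- Weak Kantorovich duality. -/
theorem ofReal_integral_add_integral_le_lintegral {π : Measure (X × Y)} {φ : X → ℝ} {ψ : Y → ℝ}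
    {c : X × Y → ℝ} (hφ : Integrable φ (π.map Prod.fst)) (hψ : Integrable ψ (π.map Prod.snd))
    (hc : ∀ x y, φ x + ψ y ≤ c (x, y)) :
    ENNReal.ofReal (∫ x, φ x ∂π.map Prod.fst + ∫ y, ψ y ∂π.map Prod.snd) ≤
      ∫⁻ q, ENNReal.ofReal (c q) ∂π := by
  have hφπ : Integrable (fun q : X × Y => φ q.1) π := hφ.comp_measurable measurable_fst
  have hψπ : Integrable (fun q : X × Y => ψ q.2) π := hψ.comp_measurable measurable_snd
  rw [integral_map measurable_fst.aemeasurable hφ.1, integral_map measurable_snd.aemeasurable hψ.1,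
    ← integral_add hφπ hψπ]
  exact (ofReal_integral_le_lintegral_ofReal (hφπ.add hψπ)).trans
    (lintegral_mono fun q => ENNReal.ofReal_le_ofReal (hc q.1 q.2))

end Duality

section Graph

variable {X Y : Type*} [MeasurableSpace X] [MeasurableSpace Y] {μ : Measure X} {S : X → Y}

theorem map_fst_map_graph (hS : Measurable S) :
    (μ.map fun x => (x, S x)).map Prod.fst = μ :=
  (Measure.fst_map_prodMk (X := id) hS).trans Measure.map_id

theorem map_snd_map_graph :
    (μ.map fun x => (x, S x)).map Prod.snd = μ.map S :=
  Measure.snd_map_prodMk measurable_id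

end Graph

section Wasserstein

variable {d : ℕ} {μ ν : Measure (EuclideanSpace ℝ (Fin d))}

theorem W2sq_le_lintegral {π : Measure (EuclideanSpace ℝ (Fin d) × EuclideanSpace ℝ (Fin d))}
    (hπμ : π.map Prod.fst = μ) (hπν : π.map Prod.snd = ν) :
    W2sq μ ν ≤ ∫⁻ q, ENNReal.ofReal (‖q.1 - q.2‖ ^ 2) ∂π :=
  sInf_le ⟨π, hπμ, hπν, rfl⟩

theorem ofReal_integral_add_integral_le_W2sq {φ ψ : EuclideanSpace ℝ (Fin d) → ℝ}
    (hφ : Integrable φ μ) (hψ : Integrable ψ ν) (hc : ∀ x y, φ x + ψ y ≤ ‖x - y‖ ^ 2) :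
    ENNReal.ofReal (∫ x, φ x ∂μ + ∫ y, ψ y ∂ν) ≤ W2sq μ ν := by
  refine le_sInf ?_
  rintro _ ⟨π, rfl, rfl, rfl⟩
  exact ofReal_integral_add_integral_le_lintegral hφ hψ fun x y => hc x y

variable {S : EuclideanSpace ℝ (Fin d) → EuclideanSpace ℝ (Fin d)}

theorem lintegral_map_graph_eq_ofReal_integral (hS : Measurable S)
    (hcost : Integrable (fun x => ‖x - S x‖ ^ 2) μ) :
    ∫⁻ q, ENNReal.ofReal (‖q.1 - q.2‖ ^ 2) ∂(μ.map fun x => (x, S x)) =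
      ENNReal.ofReal (∫ x, ‖x - S x‖ ^ 2 ∂μ) := by
  rw [lintegral_map (by fun_prop) (measurable_id'.prodMk hS),
    ofReal_integral_eq_lintegral_ofReal hcost (.of_forall fun x => by positivity)]

theorem W2sq_map_eq_ofReal_integral (hS : Measurable S) (ψ : EuclideanSpace ℝ (Fin d) → ℝ)
    (hcost : Integrable (fun x => ‖x - S x‖ ^ 2) μ) (hψ : Integrable ψ (μ.map S))
    (hdual : ∀ x y, ‖x - S x‖ ^ 2 - ψ (S x) + ψ y ≤ ‖x - y‖ ^ 2) :
    W2sq μ (μ.map S) = ENNReal.ofReal (∫ x, ‖x - S x‖ ^ 2 ∂μ) := by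
  refine le_antisymm ?_ ?_
  · rw [← lintegral_map_graph_eq_ofReal_integral hS hcost]
    exact W2sq_le_lintegral (map_fst_map_graph hS) map_snd_map_graph
  · have hψS : Integrable (fun x => ψ (S x)) μ := hψ.comp_measurable hS
    have := ofReal_integral_add_integral_le_W2sq (φ := fun x => ‖x - S x‖ ^ 2 - ψ (S x))
      (hcost.sub hψS) hψ hdual
    rwa [integral_map hS.aemeasurable hψ.1, integral_sub hcost hψS, sub_add_cancel] at this

end Wasserstein

section BallMoments

theorem Continuous.integrableOn_ball {E F : Type*} [MetricSpace E] [ProperSpace E]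
    [MeasurableSpace E] [OpensMeasurableSpace E] [NormedAddCommGroup F] {μ : Measure E}
    [IsLocallyFiniteMeasure μ] {f : E → F} (hf : Continuous f) (x : E) (r : ℝ) :
    IntegrableOn f (ball x r) μ :=
  (hf.continuousOn.integrableOn_compact (isCompact_closedBall x r)).mono_set ball_subset_closedBall

theorem integral_ball_norm_pow {E : Type*} [NormedAddCommGroup E] [NormedSpace ℝ E]
    [FiniteDimensional ℝ E] [MeasurableSpace E] [BorelSpace E] [Nontrivial E]
    (μ : Measure E) [μ.IsAddHaarMeasure] (k : ℕ) {r : ℝ} (hr : 0 ≤ r) :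
    ∫ x in ball 0 r, ‖x‖ ^ k ∂μ =
      Module.finrank ℝ E * μ.real (ball 0 1) * r ^ (Module.finrank ℝ E + k) /
        (Module.finrank ℝ E + k) := by
  have hpolar := integral_fun_norm_addHaar μ ((Iio r).indicator fun y : ℝ => y ^ k)
  set n := Module.finrank ℝ E
  have hn : 1 ≤ n := Module.finrank_pos
  have hball : ∀ x : E, (Iio r).indicator (fun y : ℝ => y ^ k) ‖x‖ =
      (ball (0 : E) r).indicator (fun x => ‖x‖ ^ k) x := fun x => by
    by_cases hx : ‖x‖ < r <;> simp [indicator, hx]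
  have hradial : ∀ y : ℝ, y ^ (n - 1) • (Iio r).indicator (fun y : ℝ => y ^ k) y =
      (Iio r).indicator (fun y : ℝ => y ^ (n - 1 + k)) y := fun y => by
    by_cases hy : y < r <;> simp [indicator, hy, pow_add]
  simp_rw [hball, hradial] at hpolar
  rw [integral_indicator measurableSet_ball, integral_indicator measurableSet_Iio,
    Measure.restrict_restrict measurableSet_Iio, Iio_inter_Ioi, ← integral_Ioc_eq_integral_Ioo,
    ← intervalIntegral.integral_of_le hr, integral_pow] at hpolar
  have hexp : n - 1 + k + 1 = n + k := by omega
  rw [hpolar, hexp, nsmul_eq_mul, smul_eq_mul, zero_pow (by omega)]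
  push_cast [hn]
  ring

theorem setIntegral_ball_comp_linearIsometryEquiv {E F : Type*} [NormedAddCommGroup E]
    [InnerProductSpace ℝ E] [FiniteDimensional ℝ E] [MeasurableSpace E] [BorelSpace E]
    [NormedAddCommGroup F] [NormedSpace ℝ F] (f : E ≃ₗᵢ[ℝ] E) (g : E → F) (r : ℝ) :
    ∫ x in ball 0 r, g (f x) = ∫ x in ball 0 r, g x := by
  have := f.measurePreserving.setIntegral_preimage_emb f.toHomeomorph.measurableEmbedding g
    (ball 0 r)
  rwa [f.preimage_ball, map_zero] at this

variable {ι : Type*} [Fintype ι]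

theorem integral_ball_coord (r : ℝ) (i : ι) :
    ∫ x in ball (0 : EuclideanSpace ℝ ι) r, x i = 0 := by
  have := setIntegral_ball_comp_linearIsometryEquiv (LinearIsometryEquiv.neg ℝ)
    (fun x : EuclideanSpace ℝ ι => x i) r
  simp only [LinearIsometryEquiv.coe_neg, PiLp.neg_apply, integral_neg] at this
  linarith

theorem integral_ball_coord_sq [Nonempty ι] {r : ℝ} (hr : 0 ≤ r) (i : ι) :
    ∫ x in ball (0 : EuclideanSpace ℝ ι) r, x i ^ 2 =
      volume.real (ball (0 : EuclideanSpace ℝ ι) 1) * r ^ (Fintype.card ι + 2) /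
        (Fintype.card ι + 2) := by
  classical
  have hswap : ∀ j, ∫ x in ball (0 : EuclideanSpace ℝ ι) r, x j ^ 2 =
      ∫ x in ball (0 : EuclideanSpace ℝ ι) r, x i ^ 2 := fun j => by
    rw [← setIntegral_ball_comp_linearIsometryEquiv
      (LinearIsometryEquiv.piLpCongrLeft 2 ℝ ℝ (Equiv.swap i j)) (fun x => x j ^ 2) r]
    simp [LinearIsometryEquiv.piLpCongrLeft_apply, Equiv.piCongrLeft'_apply]
  have hsum := integral_ball_norm_pow (volume : Measure (EuclideanSpace ℝ ι)) 2 hr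
  simp_rw [EuclideanSpace.real_norm_sq_eq] at hsum
  rw [integral_finsetSum _ fun j _ => Continuous.integrableOn_ball (by fun_prop) 0 r] at hsum
  simp only [hswap, Finset.sum_const, Finset.card_univ, nsmul_eq_mul,
    finrank_euclideanSpace] at hsum
  have hcard : (Fintype.card ι : ℝ) ≠ 0 := by positivity
  field_simp at hsum ⊢
  linear_combination hsum

end BallMoments

theorem measurePreserving_add_toEuclideanLin_diagonal {ι : Type*} [Fintype ι] [DecidableEq ι]
    (b : EuclideanSpace ℝ ι) {t : ι → ℝ} (ht : ∏ i, t i = 1) :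
    MeasurePreserving (fun x => b + Matrix.toEuclideanLin (Matrix.diagonal t) x) := by
  have hdet : LinearMap.det (Matrix.toEuclideanLin (Matrix.diagonal t)) = 1 := by
    rw [LinearMap.det_toLpLin, Matrix.det_diagonal, ht]
  have hL : MeasurePreserving (Matrix.toEuclideanLin (Matrix.diagonal t)) :=
    ⟨LinearMap.continuous_of_finiteDimensional _ |>.measurable, by
      simpa [hdet] using Measure.map_linearMap_addHaar_eq_smul_addHaar volume
        (f := Matrix.toEuclideanLin (Matrix.diagonal t)) (by simp [hdet])⟩
  exact (measurePreserving_add_left volume b).comp hL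

theorem integral_ball_sum_sq_affine {ι : Type*} [Fintype ι] {r : ℝ} (hr : 0 < r)
    (c b : ι → ℝ) :
    ∫ x in ball (0 : EuclideanSpace ℝ ι) r, ∑ j, (c j * x j - b j) ^ 2 =
      volume.real (ball (0 : EuclideanSpace ℝ ι) 1) * r ^ Fintype.card ι *
        (∑ j, b j ^ 2 + r ^ 2 * ∑ j, c j ^ 2 / (Fintype.card ι + 2)) := by
  cases isEmpty_or_nonempty ι
  · simp
  have hvol : volume.real (ball (0 : EuclideanSpace ℝ ι) r) =
      volume.real (ball (0 : EuclideanSpace ℝ ι) 1) * r ^ Fintype.card ι := by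
    rw [measureReal_def, Measure.addHaar_ball_of_pos _ _ hr, finrank_euclideanSpace,
      ENNReal.toReal_mul, ENNReal.toReal_ofReal (by positivity), measureReal_def, mul_comm]
  have hexpand : ∀ (x : EuclideanSpace ℝ ι) j,
      (c j * x j - b j) ^ 2 = c j ^ 2 * x j ^ 2 - 2 * c j * b j * x j + b j ^ 2 := fun x j => by
    ring
  simp_rw [hexpand]
  rw [integral_finsetSum _ fun j _ => Continuous.integrableOn_ball (by fun_prop) 0 r]
  have hj : ∀ j, ∫ x in ball (0 : EuclideanSpace ℝ ι) r,
      (c j ^ 2 * x j ^ 2 - 2 * c j * b j * x j + b j ^ 2) =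
      c j ^ 2 * (volume.real (ball (0 : EuclideanSpace ℝ ι) 1) * r ^ (Fintype.card ι + 2) /
        (Fintype.card ι + 2)) + b j ^ 2 * volume.real (ball (0 : EuclideanSpace ℝ ι) r) := by
    intro j
    rw [integral_add, integral_sub, integral_const_mul, integral_const_mul, integral_ball_coord_sq
      hr.le, integral_ball_coord, setIntegral_const, smul_eq_mul]
    · ring
    all_goals exact Continuous.integrableOn_ball (by fun_prop) 0 r
  simp_rw [hj, hvol, Finset.sum_add_distrib, ← Finset.sum_mul, ← Finset.sum_div]
  ring

/-- The dual potential `|y|² - 2 u*(y)`, where `u x = ⟪b, x⟫ + ∑ âⱼ xⱼ² / (2r)` is the convex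
function whose gradient is the linear transport map. -/
noncomputable def ellipsoidDualPotential {d : ℕ} (r : ℝ) (b : EuclideanSpace ℝ (Fin d))
    (ahat : Fin d → ℝ) (y : EuclideanSpace ℝ (Fin d)) : ℝ :=
  ∑ j, (y j ^ 2 - r / ahat j * (y j - b j) ^ 2)

theorem continuous_ellipsoidDualPotential {d : ℕ} (r : ℝ) (b : EuclideanSpace ℝ (Fin d))
    (ahat : Fin d → ℝ) : Continuous (ellipsoidDualPotential r b ahat) := by
  unfold ellipsoidDualPotential
  fun_prop

section BallToEllipsoid

variable {d : ℕ} {r : ℝ} {b : EuclideanSpace ℝ (Fin d)} {ahat : Fin d → ℝ}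
  {S : EuclideanSpace ℝ (Fin d) → EuclideanSpace ℝ (Fin d)}

theorem eq_add_toEuclideanLin_diagonal (hS : ∀ x j, S x j = b j + ahat j * x j / r) :
    S = fun x => b + Matrix.toEuclideanLin (Matrix.diagonal fun j => ahat j / r) x := by
  ext x j
  simp [hS, Matrix.toLpLin_apply, Matrix.mulVec_diagonal]
  ring

theorem preimage_ellipsoid (hr : 0 < r) (hpos : ∀ j, 0 < ahat j)
    (hS : ∀ x j, S x j = b j + ahat j * x j / r) :
    S ⁻¹' ((fun y => b + y) '' {x : EuclideanSpace ℝ (Fin d) | ∑ j, (x j / ahat j) ^ 2 < 1}) =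
      ball 0 r := by
  ext x
  have hcoord : ∀ j, ((S x - b) j / ahat j) ^ 2 = x j ^ 2 / r ^ 2 := fun j => by
    rw [PiLp.sub_apply, hS]
    field_simp [(hpos j).ne']
    ring
  rw [mem_preimage, image_add_left, mem_preimage, neg_add_eq_sub, mem_ofPred_eq]
  simp_rw [hcoord, ← Finset.sum_div, div_lt_one (pow_pos hr 2), ← EuclideanSpace.real_norm_sq_eq,
    mem_ball_zero_iff]
  exact sq_lt_sq₀ (norm_nonneg x) hr.le

theorem map_restrict_ball_eq_restrict_ellipsoid (hr : 0 < r) (hpos : ∀ j, 0 < ahat j)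
    (hprod : ∏ j, ahat j = r ^ d) (hS : ∀ x j, S x j = b j + ahat j * x j / r) :
    (volume.restrict (ball 0 r)).map S = volume.restrict
      ((fun y => b + y) '' {x : EuclideanSpace ℝ (Fin d) | ∑ j, (x j / ahat j) ^ 2 < 1}) := by
  have hvol : MeasurePreserving S := by
    rw [eq_add_toEuclideanLin_diagonal hS]
    refine measurePreserving_add_toEuclideanLin_diagonal b ?_
    rw [Finset.prod_div_distrib, hprod, Finset.prod_const, Finset.card_univ, Fintype.card_fin,
      div_self (by positivity)]
  have hmeas : MeasurableSet
      ((fun y => b + y) '' {x : EuclideanSpace ℝ (Fin d) | ∑ j, (x j / ahat j) ^ 2 < 1}) := by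
    rw [image_add_left]
    exact measurable_const_add (-b) (measurableSet_lt (by fun_prop) measurable_const)
  rw [← preimage_ellipsoid hr hpos hS]
  exact (hvol.restrict_preimage hmeas).map_eq

theorem sq_norm_sub_sub_ellipsoidDualPotential_le (hr : 0 < r) (hpos : ∀ j, 0 < ahat j)
    (hS : ∀ x j, S x j = b j + ahat j * x j / r) (x y : EuclideanSpace ℝ (Fin d)) :
    ‖x - S x‖ ^ 2 - ellipsoidDualPotential r b ahat (S x) + ellipsoidDualPotential r b ahat y ≤
      ‖x - y‖ ^ 2 := by
  simp only [EuclideanSpace.real_norm_sq_eq, ellipsoidDualPotential, PiLp.sub_apply,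
    ← Finset.sum_sub_distrib, ← Finset.sum_add_distrib]
  refine Finset.sum_le_sum fun j _ => ?_
  have ha := hpos j
  have hgap : (x j - y j) ^ 2 - ((x j - S x j) ^ 2 -
      (S x j ^ 2 - r / ahat j * (S x j - b j) ^ 2) + (y j ^ 2 - r / ahat j * (y j - b j) ^ 2)) =
      r / ahat j * (ahat j / r * x j - (y j - b j)) ^ 2 := by
    rw [hS]
    field_simp
    ring
  rw [← sub_nonneg, hgap]
  positivity

theorem integral_ball_sq_norm_sub (hr : 0 < r) (hS : ∀ x j, S x j = b j + ahat j * x j / r) :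
    ∫ x in ball (0 : EuclideanSpace ℝ (Fin d)) r, ‖x - S x‖ ^ 2 =
      volume.real (ball (0 : EuclideanSpace ℝ (Fin d)) 1) * r ^ d *
        (‖b‖ ^ 2 + (∑ j, (ahat j - r) ^ 2) / (d + 2)) := by
  have hcoord : ∀ x, ‖x - S x‖ ^ 2 = ∑ j, ((1 - ahat j / r) * x j - b j) ^ 2 := fun x => by
    simp only [EuclideanSpace.real_norm_sq_eq, PiLp.sub_apply, hS]
    exact Finset.sum_congr rfl fun j _ => by ring
  have hscale : ∀ j, r ^ 2 * (1 - ahat j / r) ^ 2 = (ahat j - r) ^ 2 := fun j => by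
    field_simp
    ring
  simp_rw [hcoord, integral_ball_sum_sq_affine hr, Fintype.card_fin,
    ← EuclideanSpace.real_norm_sq_eq, Finset.mul_sum, ← mul_div_assoc, hscale, ← Finset.sum_div]

end BallToEllipsoid

theorem wasserstein_ball_to_ellipsoid_general
    (d : ℕ) (r : ℝ) (hr : 0 < r) (b : EuclideanSpace ℝ (Fin d))
    (ahat : Fin d → ℝ) (hpos : ∀ j, 0 < ahat j) (hprod : ∏ j, ahat j = r ^ d)
    (S : EuclideanSpace ℝ (Fin d) → EuclideanSpace ℝ (Fin d))
    (hS : ∀ x, ∀ j, S x j = b j + ahat j * x j / r) :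
    W2sq (volume.restrict (Metric.ball (0 : EuclideanSpace ℝ (Fin d)) r))
        (volume.restrict ((fun y => b + y) ''
          {x : EuclideanSpace ℝ (Fin d) | ∑ j, (x j / ahat j) ^ 2 < 1})) =
      ENNReal.ofReal
        ((volume (Metric.ball (0 : EuclideanSpace ℝ (Fin d)) 1)).toReal * r ^ d *
          (‖b‖ ^ 2 + (∑ j, (ahat j - r) ^ 2) / (d + 2))) ∧
    ((Measure.map (fun x => (x, S x))
        (volume.restrict (Metric.ball (0 : EuclideanSpace ℝ (Fin d)) r))).map Prod.fst =
        volume.restrict (Metric.ball (0 : EuclideanSpace ℝ (Fin d)) r)) ∧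
    ((Measure.map (fun x => (x, S x))
        (volume.restrict (Metric.ball (0 : EuclideanSpace ℝ (Fin d)) r))).map Prod.snd =
        volume.restrict ((fun y => b + y) ''
          {x : EuclideanSpace ℝ (Fin d) | ∑ j, (x j / ahat j) ^ 2 < 1})) ∧
    (∫⁻ q, ENNReal.ofReal (‖q.1 - q.2‖ ^ 2)
        ∂(Measure.map (fun x => (x, S x))
          (volume.restrict (Metric.ball (0 : EuclideanSpace ℝ (Fin d)) r)))) =
      ENNReal.ofReal
        ((volume (Metric.ball (0 : EuclideanSpace ℝ (Fin d)) 1)).toReal * r ^ d *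
          (‖b‖ ^ 2 + (∑ j, (ahat j - r) ^ 2) / (d + 2))) := by
  have hS_cont : Continuous S := by
    rw [eq_add_toEuclideanLin_diagonal hS]
    fun_prop
  have hmap := map_restrict_ball_eq_restrict_ellipsoid hr hpos hprod hS
  have hcost : Integrable (fun x => ‖x - S x‖ ^ 2) (volume.restrict (ball 0 r)) :=
    Continuous.integrableOn_ball (by fun_prop) 0 r
  have hψ_cont := continuous_ellipsoidDualPotential r b ahat
  have hψ : Integrable (ellipsoidDualPotential r b ahat) ((volume.restrict (ball 0 r)).map S) :=
    (integrable_map_measure hψ_cont.aestronglyMeasurable hS_cont.aemeasurable).2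
      ((hψ_cont.comp hS_cont).integrableOn_ball 0 r)
  have hvalue := integral_ball_sq_norm_sub hr hS
  rw [← measureReal_def, ← hvalue, ← hmap]
  exact ⟨W2sq_map_eq_ofReal_integral hS_cont.measurable _ hcost hψ
      (sq_norm_sub_sub_ellipsoidDualPotential_le hr hpos hS),
    map_fst_map_graph hS_cont.measurable, map_snd_map_graph,
    lintegral_map_graph_eq_ofReal_integral hS_cont.measurable hcost⟩

/-- The squared Wasserstein distance between the uniform measure on the
ball `B(0,r)` and on the translated co-axial ellipsoid `b + E_â` (of equal volume,
`∏ âⱼ = r^d`) equals `ω_d r^d (|b|² + |â − (r,…,r)|²/(d+2))`, and the infimum is attained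
by the coupling induced by the linear map `x ↦ b + (â₁x₁/r, …, â_d x_d/r)`. -/
theorem wasserstein_ball_to_ellipsoid
    (d : ℕ) (hd : 1 ≤ d) (r : ℝ) (hr : 0 < r) (b : EuclideanSpace ℝ (Fin d))
    (ahat : Fin d → ℝ) (hpos : ∀ j, 0 < ahat j) (hprod : ∏ j, ahat j = r ^ d)
    (S : EuclideanSpace ℝ (Fin d) → EuclideanSpace ℝ (Fin d))
    (hS : ∀ x, ∀ j, S x j = b j + ahat j * x j / r) :
    W2sq (volume.restrict (Metric.ball (0 : EuclideanSpace ℝ (Fin d)) r))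
        (volume.restrict ((fun y => b + y) ''
          {x : EuclideanSpace ℝ (Fin d) | ∑ j, (x j / ahat j) ^ 2 < 1})) =
      ENNReal.ofReal
        ((volume (Metric.ball (0 : EuclideanSpace ℝ (Fin d)) 1)).toReal * r ^ d *
          (‖b‖ ^ 2 + (∑ j, (ahat j - r) ^ 2) / (d + 2))) ∧
    ((Measure.map (fun x => (x, S x))
        (volume.restrict (Metric.ball (0 : EuclideanSpace ℝ (Fin d)) r))).map Prod.fst =
        volume.restrict (Metric.ball (0 : EuclideanSpace ℝ (Fin d)) r)) ∧
    ((Measure.map (fun x => (x, S x))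
        (volume.restrict (Metric.ball (0 : EuclideanSpace ℝ (Fin d)) r))).map Prod.snd =
        volume.restrict ((fun y => b + y) ''
          {x : EuclideanSpace ℝ (Fin d) | ∑ j, (x j / ahat j) ^ 2 < 1})) ∧
    (∫⁻ q, ENNReal.ofReal (‖q.1 - q.2‖ ^ 2)
        ∂(Measure.map (fun x => (x, S x))
          (volume.restrict (Metric.ball (0 : EuclideanSpace ℝ (Fin d)) r)))) =
      ENNReal.ofReal
        ((volume (Metric.ball (0 : EuclideanSpace ℝ (Fin d)) 1)).toReal * r ^ d *
          (‖b‖ ^ 2 + (∑ j, (ahat j - r) ^ 2) / (d + 2))) :=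
  wasserstein_ball_to_ellipsoid_general d r hr b ahat hpos hprod S hS
end
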